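/- Define the operators L₁ = z(1−z)∂_z² + (1−β−(2+α)z)∂_z and L₂ = (1−z)∂_z − (α+1)I acting on smooth functions. Then for every nonnegative integer n, L₁ P_n(z; α, β) = −n(n+α+1) P_n(z; α+1, β−1) and L₂ P_n(z; α, β) = −(n+α+1) P_n(z; α+1, β−1). In particular L₁ P_n = n L₂ P_n. -/

import Mathlib

/-! Write `P_n(z; α, β) = ∑ aₖ zᵏ`. In terms of coefficients, `L₂` and `L₁` are the two-term
recurrences `(k+1) aₖ₊₁ - (k+α+1) aₖ` and `(k+1)(k+1-β) aₖ₊₁ - k(k+α+1) aₖ`. Their difference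
`L₁ - n L₂` is `(k+1)(k+1-β-n) aₖ₊₁ - (k-n)(k+α+1) aₖ`, which vanishes by the hypergeometric
ratio `aₖ₊₁ / aₖ = (k-n)(k+α+1) / ((k+1)(k+1-β-n))`. Passing from `(α, β)` to `(α+1, β-1)`
multiplies `aₖ` by `(1-β)(α+1+k) / ((α+1+n)(1-β-n+k))`, and with the same ratio this turns the
`L₂` recurrence into `-(n+α+1)` times the coefficients of `P_n(z; α+1, β-1)`. -/

open Finset

noncomputable def poch (a : ℝ) (k : ℕ) : ℝ := ∏ i ∈ Finset.range k, (a + i)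

noncomputable def HR (n : ℕ) (α β : ℝ) (z : ℝ) : ℝ :=
  (poch β n / poch (α + 1) n) *
    ∑ k ∈ Finset.range (n + 1),
      (poch (-(n : ℝ)) k * poch (α + 1) k) / ((k.factorial : ℝ) * poch (1 - β - (n : ℝ)) k) * z ^ k

open Polynomial

theorem poch_succ (a : ℝ) (k : ℕ) : poch a (k + 1) = poch a k * (a + k) :=
  prod_range_succ _ _

theorem poch_succ' (a : ℝ) (k : ℕ) : poch a (k + 1) = a * poch (a + 1) k := by
  simp only [poch, prod_range_succ', Nat.cast_zero, add_zero, Nat.cast_succ, mul_comm a]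
  congr! 2 with i
  ring

theorem poch_add_one {a : ℝ} (ha : a ≠ 0) (k : ℕ) : poch (a + 1) k = poch a k * (a + k) / a := by
  rw [eq_div_iff ha, ← poch_succ, poch_succ', mul_comm]

theorem poch_sub_one {a : ℝ} {k : ℕ} (h : a - 1 + k ≠ 0) :
    poch (a - 1) k = (a - 1) * poch a k / (a - 1 + k) := by
  rw [eq_div_iff h, ← poch_succ, poch_succ', sub_add_cancel]

theorem poch_ne_zero {a : ℝ} {k : ℕ} (h : ∀ j < k, a + j ≠ 0) : poch a k ≠ 0 :=
  prod_ne_zero_iff.mpr fun j hj => h j (mem_range.mp hj)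

theorem poch_neg_natCast_eq_zero_of_lt {n k : ℕ} (h : n < k) : poch (-n) k = 0 :=
  prod_eq_zero (mem_range.mpr h) (neg_add_cancel _)

section Operators

variable {R : Type*} [CommRing R]

noncomputable def hrL₁ (α β : R) (p : R[X]) : R[X] :=
  X * (1 - X) * derivative (derivative p) + (C (1 - β) - C (2 + α) * X) * derivative p

noncomputable def hrL₂ (α : R) (p : R[X]) : R[X] :=
  (1 - X) * derivative p - C (α + 1) * p

theorem coeff_X_mul_derivative (p : R[X]) (k : ℕ) :
    (X * derivative p).coeff k = k * p.coeff k := by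
  rcases k with _ | k
  · simp
  · rw [coeff_X_mul, coeff_derivative]; push_cast; ring

theorem coeff_hrL₂ (α : R) (p : R[X]) (k : ℕ) :
    (hrL₂ α p).coeff k = (k + 1) * p.coeff (k + 1) - (k + α + 1) * p.coeff k := by
  simp only [hrL₂, sub_mul, one_mul, coeff_sub, coeff_X_mul_derivative, coeff_derivative,
    coeff_C_mul]
  ring

theorem coeff_hrL₁ (α β : R) (p : R[X]) (k : ℕ) :
    (hrL₁ α β p).coeff k
      = (k + 1) * (k + 1 - β) * p.coeff (k + 1) - k * (k + α + 1) * p.coeff k := by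
  -- `X² p'' = X (X p')' - X p'` leaves only the operator `X ∂`, which scales `Xᵏ` by `k`.
  have h : hrL₁ α β p = X * derivative (derivative p) - X * derivative (X * derivative p)
      + C (1 - β) * derivative p - C (1 + α) * (X * derivative p) := by
    simp only [hrL₁, derivative_mul, derivative_X, one_mul, map_add, map_sub, map_one, map_ofNat]
    ring
  rw [h]
  simp only [coeff_add, coeff_sub, coeff_C_mul, coeff_X_mul_derivative, coeff_derivative]
  ring

end Operators

noncomputable def hrCoeff (n : ℕ) (α β : ℝ) (k : ℕ) : ℝ :=
  poch β n / poch (α + 1) n *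
    (poch (-n) k * poch (α + 1) k / (k.factorial * poch (1 - β - n) k))

noncomputable def hrPoly (n : ℕ) (α β : ℝ) : ℝ[X] :=
  ∑ k ∈ range (n + 1), C (hrCoeff n α β k) * X ^ k

section Coefficients

variable {n : ℕ} {α β : ℝ}

theorem hrCoeff_eq_zero_of_lt {k : ℕ} (h : n < k) : hrCoeff n α β k = 0 := by
  simp [hrCoeff, poch_neg_natCast_eq_zero_of_lt h]

theorem HR_eq_eval_hrPoly (z : ℝ) : HR n α β z = (hrPoly n α β).eval z := by
  simp only [HR, hrPoly, hrCoeff, eval_finsetSum, eval_mul, eval_C, eval_pow, eval_X, mul_sum,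
    mul_assoc]

theorem coeff_hrPoly (k : ℕ) : (hrPoly n α β).coeff k = hrCoeff n α β k := by
  simp only [hrPoly, finsetSum_coeff, coeff_C_mul_X_pow, sum_ite_eq, mem_range]
  split_ifs with h
  · rfl
  · exact (hrCoeff_eq_zero_of_lt (by omega)).symm

-- No side conditions: with `x / 0 = 0`, `a / b * (c / d) = a * c / (b * d)` holds in every case.
theorem hrCoeff_succ (k : ℕ) :
    hrCoeff n α β (k + 1)
      = (-n + k) * (α + 1 + k) / ((k + 1) * (1 - β - n + k)) * hrCoeff n α β k := by
  simp only [hrCoeff, poch_succ, Nat.factorial_succ, Nat.cast_mul, Nat.cast_succ, div_eq_mul_inv,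
    mul_inv]
  ring

theorem hrCoeff_shift (hα : ∀ j < n + 1, α + 1 + j ≠ 0) (hβ : β - 1 + n ≠ 0) {k : ℕ}
    (hd : ∀ j < k + 1, 1 - β - n + j ≠ 0) :
    hrCoeff n (α + 1) (β - 1) k
      = (1 - β) * (α + 1 + k) / ((α + 1 + n) * (1 - β - n + k)) * hrCoeff n α β k := by
  have hα₀ : α + 1 ≠ 0 := by simpa using hα 0 (by omega)
  have hd₀ : 1 - β - n ≠ 0 := by simpa using hd 0 (by omega)
  have hαn := hα n (by omega)
  have hdk := hd k (by omega)
  have hαpoch : poch (α + 1) n ≠ 0 := poch_ne_zero fun j hj => hα j (by omega)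
  have hdpoch : poch (1 - β - n) k ≠ 0 := poch_ne_zero fun j hj => hd j (by omega)
  have hshift : 1 - (β - 1) - (n : ℝ) = 1 - β - n + 1 := by ring
  simp only [hrCoeff, hshift, poch_add_one hα₀, poch_add_one hd₀, poch_sub_one hβ]
  field_simp
  ring

theorem hrL₂_hrPoly (hα : ∀ j < n + 1, α + 1 + j ≠ 0) (hβ : β - 1 + n ≠ 0)
    (hd : ∀ j < n + 1, 1 - β - n + j ≠ 0) :
    hrL₂ α (hrPoly n α β) = C (-(n + α + 1)) * hrPoly n (α + 1) (β - 1) := by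
  ext k
  rw [coeff_hrL₂, coeff_C_mul, coeff_hrPoly, coeff_hrPoly, coeff_hrPoly]
  rcases le_or_gt k n with hk | hk
  · have hdk := hd k (by omega)
    have hαn := hα n (by omega)
    rw [hrCoeff_succ, hrCoeff_shift hα hβ fun j hj => hd j (by omega)]
    field_simp
    ring
  · simp [hrCoeff_eq_zero_of_lt hk, hrCoeff_eq_zero_of_lt (hk.trans (Nat.lt_succ_self k))]

theorem hrL₁_hrPoly (hd : ∀ j < n + 1, 1 - β - n + j ≠ 0) :
    hrL₁ α β (hrPoly n α β) = C (n : ℝ) * hrL₂ α (hrPoly n α β) := by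
  ext k
  rw [coeff_hrL₁, coeff_C_mul, coeff_hrL₂, coeff_hrPoly, coeff_hrPoly]
  rcases le_or_gt k n with hk | hk
  · have hdk := hd k (by omega)
    rw [hrCoeff_succ]
    field_simp
    ring
  · simp [hrCoeff_eq_zero_of_lt hk, hrCoeff_eq_zero_of_lt (hk.trans (Nat.lt_succ_self k))]

end Coefficients

theorem hr_gevp (n : ℕ) (α β : ℝ)
    (hβ : ∀ j < n, β + (j : ℝ) ≠ 0)
    (hα : ∀ j < n + 1, α + 1 + (j : ℝ) ≠ 0)
    (hd : ∀ j < n, 1 - β - (n : ℝ) + (j : ℝ) ≠ 0)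
    (hd' : ∀ j < n, 1 - (β - 1) - (n : ℝ) + (j : ℝ) ≠ 0) :
    (∀ z : ℝ,
      z * (1 - z) * deriv (deriv (fun t => HR n α β t)) z
        + (1 - β - (2 + α) * z) * deriv (fun t => HR n α β t) z
      = -((n : ℝ) * ((n : ℝ) + α + 1)) * HR n (α + 1) (β - 1) z) ∧
    (∀ z : ℝ,
      (1 - z) * deriv (fun t => HR n α β t) z - (α + 1) * HR n α β z
      = -((n : ℝ) + α + 1) * HR n (α + 1) (β - 1) z) ∧
    (∀ z : ℝ,
      z * (1 - z) * deriv (deriv (fun t => HR n α β t)) z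
        + (1 - β - (2 + α) * z) * deriv (fun t => HR n α β t) z
      = (n : ℝ) * ((1 - z) * deriv (fun t => HR n α β t) z - (α + 1) * HR n α β z)) := by
  suffices h : hrL₂ α (hrPoly n α β) = C (-(n + α + 1)) * hrPoly n (α + 1) (β - 1) ∧
      hrL₁ α β (hrPoly n α β) = C (n : ℝ) * hrL₂ α (hrPoly n α β) by
    have hderiv (p : ℝ[X]) : deriv (fun t => p.eval t) = fun t => p.derivative.eval t :=
      funext fun _ => p.deriv
    have h₂ z := congrArg (eval z) h.1
    have h₁ z := congrArg (eval z) h.2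
    simp only [hrL₁, hrL₂, eval_add, eval_sub, eval_mul, eval_C, eval_X, eval_one] at h₁ h₂
    simp only [HR_eq_eval_hrPoly, hderiv]
    refine ⟨fun z => ?_, h₂, h₁⟩
    rw [h₁, h₂]
    ring
  obtain rfl | hn := n.eq_zero_or_pos
  · simp [hrPoly, hrCoeff, poch, hrL₁, hrL₂]
  · have hd₀ : ∀ j < n + 1, 1 - β - n + j ≠ 0 := fun
      | 0, _ => hd 0 hn
      | j + 1, hj => by convert hd' j (by omega) using 1; push_cast; ring
    have hβ₀ : β - 1 + n ≠ 0 := by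
      convert hβ (n - 1) (by omega) using 1; rw [Nat.cast_pred hn]; ring
    exact ⟨hrL₂_hrPoly hα hβ₀ hd₀, hrL₁_hrPoly hd₀⟩
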